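/- Let a,b ∈ ℂ and suppose polynomials t_i ∈ ℂ[λ] (i ∈ ℤ) satisfy −((1/2)λ+μ)·t_i(μ) + (a−1/2)λ² + bλ = ((1/2)λ−μ)·t_{i+j}(λ+μ) for all i,j ∈ ℤ. Then t_i(λ) = (2a−1)λ + b for all i. -/

import Mathlib

open Polynomial

/-! Putting `λ = 2μ` kills the right-hand side, leaving `2μ · t_i(μ) = 2μ · ((2a−1)μ + b)`; so
`t_i` agrees with `(2a−1)λ + b` away from `0`, hence everywhere. -/

theorem Polynomial.eq_of_eval_eq_of_ne {R : Type*} [CommRing R] [IsDomain R] [Infinite R]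
    {p q : R[X]} (c : R) (h : ∀ x, x ≠ c → p.eval x = q.eval x) : p = q :=
  eq_of_infinite_eval_eq p q <| (Set.finite_singleton c).infinite_compl.mono fun x hx => h x hx

theorem stmt7 (a b : ℂ) (t : ℤ → Polynomial ℂ)
    (h : ∀ (i j : ℤ) (l m : ℂ),
      -((1/2)*l + m) * (t i).eval m + (a - 1/2)*l^2 + b*l
        = ((1/2)*l - m) * (t (i+j)).eval (l + m)) :
    ∀ (i : ℤ) (l : ℂ), (t i).eval l = (2*a - 1)*l + b := by
  intro i
  have off_zero : ∀ m : ℂ, m ≠ 0 → (t i).eval m = (C (2*a - 1) * X + C b).eval m := by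
    intro m hm
    have diagonal := h i 0 (2*m) m
    rw [add_zero] at diagonal
    refine mul_left_cancel₀ (mul_ne_zero two_ne_zero hm) ?_
    simp only [eval_add, eval_mul, eval_C, eval_X]
    linear_combination -diagonal
  intro l
  simpa using congrArg (eval l) (Polynomial.eq_of_eval_eq_of_ne 0 off_zero)
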